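/- arXiv:2307.00517 — 2 statements merged into one kernel-verified Lean document; each statement's English description precedes it below -/
import Mathlib

section
/- Let (p_m), (q_n) be positive sequences with partial sums P_m, Q_n strictly increasing to infinity, satisfying P_{m−1}/P_m → 1 and Q_{n−1}/Q_n → 1. Let (u_{mn}) be a double sequence of complex numbers whose weighted means σ_{mn} are P-convergent to ℓ. If (u_{mn}) is slowly oscillating relative to (P_m), slowly oscillating relative to (Q_n), and slowly oscillating relative to (Q_n) in the strong sense, then (u_{mn}) is P-convergent to ℓ. -/
/-!
For `m < m'` and `n < n'` the `p_i q_j`-weighted mean of `u` over the rectangle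
`(m, m'] × (n, n']` is, by inclusion–exclusion,
`(P m' Q n' σ m' n' - P m Q n' σ m n' - P m' Q n σ m' n + P m Q n σ m n)`
divided by `(P m' - P m) (Q n' - Q n)`.
Because `P (m - 1) / P m → 1`, one can take `m'` with `(1 + λ) / 2 ≤ P m' / P m ≤ λ`, and `n'`
likewise; the coefficients then stay bounded, so the mean is close to `ℓ`. Slow oscillation in
`i` and, in the strong sense, in `j` keeps every `u i j` of the rectangle, hence the mean, close
to `u m n`.
-/

open Filter Finset Topology

lemma Finset.sum_Ioc_eq_sub_sum_range {M : Type*} [AddCommGroup M] (f : ℕ → M) {m m' : ℕ}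
    (h : m ≤ m') :
    ∑ i ∈ Ioc m m', f i = ∑ i ∈ range (m' + 1), f i - ∑ i ∈ range (m + 1), f i := by
  rw [← Ico_add_one_add_one_eq_Ioc, sum_Ico_eq_sub _ (by omega)]

lemma Finset.sum_Ioc_sum_Ioc_eq {M : Type*} [AddCommGroup M] (f : ℕ → ℕ → M)
    (S : ℕ → ℕ → M) (hS : ∀ a b, S a b = ∑ i ∈ range (a + 1), ∑ j ∈ range (b + 1), f i j)
    {m m' n n' : ℕ} (hm : m ≤ m') (hn : n ≤ n') :
    ∑ i ∈ Ioc m m', ∑ j ∈ Ioc n n', f i j = S m' n' - S m n' - S m' n + S m n := by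
  simp only [hS, sum_Ioc_eq_sub_sum_range _ hn, sum_sub_distrib, sum_Ioc_eq_sub_sum_range _ hm]
  abel

lemma norm_sum_smul_sub_sum_smul_le {ι E : Type*} [SeminormedAddCommGroup E] [NormedSpace ℝ E]
    {s : Finset ι} {w : ι → ℝ} {x : ι → E} {c : E} {η : ℝ} (hw : ∀ i ∈ s, 0 ≤ w i)
    (hx : ∀ i ∈ s, ‖x i - c‖ ≤ η) :
    ‖∑ i ∈ s, w i • x i - (∑ i ∈ s, w i) • c‖ ≤ η * ∑ i ∈ s, w i := by
  rw [sum_smul, ← sum_sub_distrib, mul_sum]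
  refine (norm_sum_le _ _).trans (sum_le_sum fun i hi => ?_)
  rw [← smul_sub, norm_smul, Real.norm_of_nonneg (hw i hi), mul_comm]
  exact mul_le_mul_of_nonneg_right (hx i hi) (hw i hi)

lemma norm_corner_combination_le {E : Type*} [SeminormedAddCommGroup E] [NormedSpace ℝ E]
    {A A' B B' δ : ℝ} (hA : 0 ≤ A) (hAA' : A ≤ A') (hB : 0 ≤ B) (hBB' : B ≤ B')
    {z₁ z₂ z₃ z₄ : E} (h₁ : ‖z₁‖ ≤ δ) (h₂ : ‖z₂‖ ≤ δ) (h₃ : ‖z₃‖ ≤ δ) (h₄ : ‖z₄‖ ≤ δ) :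
    ‖(A' * B') • z₁ - (A * B') • z₂ - (A' * B) • z₃ + (A * B) • z₄‖ ≤ 4 * (A' * B') * δ := by
  have hcorner : ∀ c : ℝ, ∀ z : E, 0 ≤ c → c ≤ A' * B' → ‖z‖ ≤ δ → ‖c • z‖ ≤ A' * B' * δ :=
    fun c z hc hcA hz => by
      rw [norm_smul, Real.norm_of_nonneg hc]
      exact mul_le_mul hcA hz (norm_nonneg z) (hc.trans hcA)
  have hA' := hA.trans hAA'
  have hB' := hB.trans hBB'
  have e₁ := hcorner _ _ (by positivity) le_rfl h₁
  have e₂ := hcorner _ _ (by positivity) (mul_le_mul_of_nonneg_right hAA' hB') h₂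
  have e₃ := hcorner _ _ (by positivity) (mul_le_mul_of_nonneg_left hBB' hA') h₃
  have e₄ := hcorner _ _ (by positivity) (mul_le_mul hAA' hBB' hB hA') h₄
  have := norm_add_le ((A' * B') • z₁ - (A * B') • z₂ - (A' * B) • z₃) ((A * B) • z₄)
  have := norm_sub_le ((A' * B') • z₁ - (A * B') • z₂) ((A' * B) • z₃)
  have := norm_sub_le ((A' * B') • z₁) ((A * B') • z₂)
  linarith

section PartialSums

variable {p P : ℕ → ℝ}

lemma pos_of_eq_sum_range (hp : ∀ i, 0 < p i) (hP : ∀ m, P m = ∑ i ∈ range (m + 1), p i)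
    (m : ℕ) : 0 < P m := by
  rw [hP]
  exact sum_pos (fun i _ => hp i) nonempty_range_add_one

lemma strictMono_of_eq_sum_range (hp : ∀ i, 0 < p i)
    (hP : ∀ m, P m = ∑ i ∈ range (m + 1), p i) : StrictMono P :=
  strictMono_nat_of_lt_succ fun m => by
    rw [hP (m + 1), sum_range_succ, ← hP m]
    linarith [hp (m + 1)]

end PartialSums

/-- Since consecutive ratios tend to `1`, the first term beyond `a P m` cannot overshoot
`l P m`. -/
lemma eventually_exists_gt_mem_Icc_mul {P : ℕ → ℝ} (hpos : ∀ m, 0 < P m) (hmono : Monotone P)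
    (htop : Tendsto P atTop atTop) (hratio : Tendsto (fun m => P (m - 1) / P m) atTop (𝓝 1))
    {a l : ℝ} (ha : 1 < a) (hal : a < l) :
    ∀ᶠ m in atTop, ∃ m' > m, P m' ∈ Set.Icc (a * P m) (l * P m) := by
  classical
  have hl : 0 < l := by linarith
  obtain ⟨N, hN⟩ := eventually_atTop.mp (hratio.eventually_const_lt ((div_lt_one hl).mpr hal))
  filter_upwards [eventually_ge_atTop N] with m hm
  have hex : ∃ i, a * P m ≤ P i := (htop.eventually_ge_atTop _).exists
  have hgt : m < Nat.find hex := by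
    by_contra! hle
    nlinarith [hmono hle, Nat.find_spec hex, hpos m]
  refine ⟨Nat.find hex, hgt, Nat.find_spec hex, ?_⟩
  have hprev : P (Nat.find hex - 1) < a * P m := not_le.mp (Nat.find_min hex (by omega))
  have hrat := hN (Nat.find hex) (by omega)
  rw [div_lt_div_iff₀ hl (hpos _)] at hrat
  nlinarith [hpos m]

lemma div_sub_le_div_sub_one {x y a l : ℝ} (hy : 0 < y) (ha : 1 < a) (hax : a * y ≤ x)
    (hxl : x ≤ l * y) : x / (x - y) ≤ l / (a - 1) := by
  have hxy : 0 < x - y := by nlinarith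
  rw [div_le_div_iff₀ hxy (by linarith)]
  nlinarith

lemma eventually_exists_gt_le_mul_and_div_sub_le {P : ℕ → ℝ} (hpos : ∀ m, 0 < P m)
    (hmono : Monotone P) (htop : Tendsto P atTop atTop)
    (hratio : Tendsto (fun m => P (m - 1) / P m) atTop (𝓝 1)) {l : ℝ} (hl : 1 < l) :
    ∀ᶠ m in atTop, ∃ m' > m, P m' ≤ l * P m ∧ P m' / (P m' - P m) ≤ 2 * l / (l - 1) := by
  filter_upwards [eventually_exists_gt_mem_Icc_mul hpos hmono htop hratio
    (a := (1 + l) / 2) (l := l) (by linarith) (by linarith)] with m ⟨m', hmm', hlow, hup⟩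
  refine ⟨m', hmm', hup, (div_sub_le_div_sub_one (hpos m) (by linarith) hlow hup).trans_eq ?_⟩
  field_simp
  ring

lemma exists_norm_sub_le_of_slowOsc {u : ℕ → ℕ → ℂ} {P Q : ℕ → ℝ} (hPnonneg : ∀ m, 0 ≤ P m)
    (hSOP : ∀ ε > (0 : ℝ), ∃ n₀ : ℕ, ∃ l > (1 : ℝ),
      ∀ m n i : ℕ, n₀ ≤ m → n₀ ≤ n → m ≤ i → P i ≤ l * P m → ‖u i n - u m n‖ ≤ ε)
    (hSOQstrong : ∀ ε > (0 : ℝ), ∃ n₀ : ℕ, ∃ l > (1 : ℝ), ∃ k > (1 : ℝ),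
      ∀ m n i j : ℕ, n₀ ≤ m → n₀ ≤ n → m ≤ i → n ≤ j →
        P i ≤ l * P m → Q j ≤ k * Q n → ‖u i j - u i n‖ ≤ ε) :
    ∀ ε > (0 : ℝ), ∃ n₀ : ℕ, ∃ l > (1 : ℝ), ∃ k > (1 : ℝ),
      ∀ m n i j : ℕ, n₀ ≤ m → n₀ ≤ n → m ≤ i → n ≤ j →
        P i ≤ l * P m → Q j ≤ k * Q n → ‖u i j - u m n‖ ≤ ε := by
  intro ε hε
  obtain ⟨n₁, l₁, hl₁, hP⟩ := hSOP (ε / 2) (by positivity)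
  obtain ⟨n₂, l₂, hl₂, k, hk, hPQ⟩ := hSOQstrong (ε / 2) (by positivity)
  refine ⟨max n₁ n₂, min l₁ l₂, lt_min hl₁ hl₂, k, hk, fun m n i j hm hn hmi hnj hPi hQj => ?_⟩
  have hPi₁ := hPi.trans (mul_le_mul_of_nonneg_right (min_le_left l₁ l₂) (hPnonneg m))
  have hPi₂ := hPi.trans (mul_le_mul_of_nonneg_right (min_le_right l₁ l₂) (hPnonneg m))
  calc ‖u i j - u m n‖ ≤ ‖u i j - u i n‖ + ‖u i n - u m n‖ :=
        norm_sub_le_norm_sub_add_norm_sub _ _ _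
    _ ≤ ε / 2 + ε / 2 := add_le_add
        (hPQ m n i j (le_of_max_le_right hm) (le_of_max_le_right hn) hmi hnj hPi₂ hQj)
        (hP m n i (le_of_max_le_left hm) (le_of_max_le_left hn) hmi hPi₁)
    _ = ε := add_halves ε

section Rectangle

variable {u σ : ℕ → ℕ → ℂ} {p q P Q : ℕ → ℝ} {m m' n n' : ℕ}

lemma sum_rectangle_weight (hP : ∀ m, P m = ∑ i ∈ range (m + 1), p i)
    (hQ : ∀ n, Q n = ∑ j ∈ range (n + 1), q j) (hm : m ≤ m') (hn : n ≤ n') :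
    ∑ x ∈ Ioc m m' ×ˢ Ioc n n', p x.1 * q x.2 = (P m' - P m) * (Q n' - Q n) := by
  rw [sum_product, hP, hP, hQ, hQ, ← sum_Ioc_eq_sub_sum_range _ hm,
    ← sum_Ioc_eq_sub_sum_range _ hn, sum_mul_sum]

lemma sum_rectangle_smul_sub_eq (hp : ∀ i, 0 < p i) (hq : ∀ j, 0 < q j)
    (hP : ∀ m, P m = ∑ i ∈ range (m + 1), p i) (hQ : ∀ n, Q n = ∑ j ∈ range (n + 1), q j)
    (hσ : ∀ m n : ℕ, σ m n =
      (∑ i ∈ range (m + 1), ∑ j ∈ range (n + 1), (p i * q j : ℝ) * u i j) /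
        ((P m * Q n : ℝ) : ℂ))
    (hm : m ≤ m') (hn : n ≤ n') (ℓ : ℂ) :
    ∑ x ∈ Ioc m m' ×ˢ Ioc n n', (p x.1 * q x.2) • u x.1 x.2
        - (∑ x ∈ Ioc m m' ×ˢ Ioc n n', p x.1 * q x.2) • ℓ =
      (P m' * Q n') • (σ m' n' - ℓ) - (P m * Q n') • (σ m n' - ℓ)
        - (P m' * Q n) • (σ m' n - ℓ) + (P m * Q n) • (σ m n - ℓ) := by
  have hS : ∀ a b, (P a * Q b) • σ a b =
      ∑ i ∈ range (a + 1), ∑ j ∈ range (b + 1), (p i * q j) • u i j := by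
    intro a b
    have hPQ : ((P a * Q b : ℝ) : ℂ) ≠ 0 := by
      exact_mod_cast (mul_pos (pos_of_eq_sum_range hp hP a) (pos_of_eq_sum_range hq hQ b)).ne'
    simp only [Complex.real_smul, hσ, mul_div_cancel₀ _ hPQ]
  rw [sum_rectangle_weight hP hQ hm hn, sum_product,
    sum_Ioc_sum_Ioc_eq (fun i j => (p i * q j) • u i j) _ hS hm hn]
  module

lemma norm_sub_le_of_rectangle {ℓ : ℂ} (hp : ∀ i, 0 < p i) (hq : ∀ j, 0 < q j)
    (hP : ∀ m, P m = ∑ i ∈ range (m + 1), p i) (hQ : ∀ n, Q n = ∑ j ∈ range (n + 1), q j)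
    (hσ : ∀ m n : ℕ, σ m n =
      (∑ i ∈ range (m + 1), ∑ j ∈ range (n + 1), (p i * q j : ℝ) * u i j) /
        ((P m * Q n : ℝ) : ℂ))
    (hm : m < m') (hn : n < n') {A B η δ : ℝ}
    (hA : P m' / (P m' - P m) ≤ A) (hB : Q n' / (Q n' - Q n) ≤ B)
    (hu : ∀ i ∈ Ioc m m', ∀ j ∈ Ioc n n', ‖u i j - u m n‖ ≤ η)
    (hσℓ : ∀ a b, m ≤ a → n ≤ b → ‖σ a b - ℓ‖ ≤ δ) :
    ‖u m n - ℓ‖ ≤ η + 4 * δ * (A * B) := by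
  have hPpos := pos_of_eq_sum_range hp hP
  have hQpos := pos_of_eq_sum_range hq hQ
  have hPm := strictMono_of_eq_sum_range hp hP hm
  have hQn := strictMono_of_eq_sum_range hq hQ hn
  set R := Ioc m m' ×ˢ Ioc n n'
  set W := ∑ x ∈ R, p x.1 * q x.2
  have hW : W = (P m' - P m) * (Q n' - Q n) := sum_rectangle_weight hP hQ hm.le hn.le
  have hWpos : 0 < W := by rw [hW]; exact mul_pos (sub_pos.mpr hPm) (sub_pos.mpr hQn)
  have hosc := norm_sum_smul_sub_sum_smul_le (fun x _ => (mul_pos (hp x.1) (hq x.2)).le)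
    (fun x hx => hu x.1 (mem_product.mp hx).1 x.2 (mem_product.mp hx).2)
  have hcorner := norm_corner_combination_le (hPpos m).le hPm.le (hQpos n).le hQn.le
    (hσℓ m' n' hm.le hn.le) (hσℓ m n' le_rfl hn.le) (hσℓ m' n hm.le le_rfl) (hσℓ m n le_rfl le_rfl)
  rw [← sum_rectangle_smul_sub_eq hp hq hP hQ hσ hm.le hn.le] at hcorner
  have hmul : W * ‖u m n - ℓ‖ ≤ η * W + 4 * (P m' * Q n') * δ :=
    calc W * ‖u m n - ℓ‖ = ‖W • (u m n - ℓ)‖ := by rw [norm_smul, Real.norm_of_nonneg hWpos.le]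
      _ = ‖(∑ x ∈ R, (p x.1 * q x.2) • u x.1 x.2 - W • ℓ)
            - (∑ x ∈ R, (p x.1 * q x.2) • u x.1 x.2 - W • u m n)‖ := by
        congr 1; module
      _ ≤ _ := (norm_sub_le _ _).trans_eq (add_comm _ _)
      _ ≤ η * W + 4 * (P m' * Q n') * δ := add_le_add hosc hcorner
  have hδ : 0 ≤ δ := (norm_nonneg _).trans (hσℓ m n le_rfl le_rfl)
  have hratio : P m' * Q n' / W ≤ A * B := by
    rw [hW, ← div_mul_div_comm]
    exact mul_le_mul hA hB (div_nonneg (hQpos n').le (sub_pos.2 hQn).le)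
      ((div_nonneg (hPpos m').le (sub_pos.2 hPm).le).trans hA)
  calc ‖u m n - ℓ‖ ≤ η + 4 * δ * (P m' * Q n' / W) := by
        rw [mul_div_assoc', ← sub_le_iff_le_add', le_div_iff₀ hWpos]
        linarith
    _ ≤ η + 4 * δ * (A * B) := by gcongr

end Rectangle

theorem stmt12_general (u : ℕ → ℕ → ℂ) (p q : ℕ → ℝ)
    (hp : ∀ m, 0 < p m) (hq : ∀ n, 0 < q n)
    (P Q : ℕ → ℝ)
    (hP : ∀ m : ℕ, P m = ∑ i ∈ Finset.range (m + 1), p i)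
    (hQ : ∀ n : ℕ, Q n = ∑ j ∈ Finset.range (n + 1), q j)
    (hPtop : Tendsto P atTop atTop) (hQtop : Tendsto Q atTop atTop)
    (hPratio : Tendsto (fun m : ℕ => P (m - 1) / P m) atTop (nhds 1))
    (hQratio : Tendsto (fun n : ℕ => Q (n - 1) / Q n) atTop (nhds 1))
    (σ : ℕ → ℕ → ℂ)
    (hσ : ∀ m n : ℕ, σ m n =
      (∑ i ∈ Finset.range (m + 1), ∑ j ∈ Finset.range (n + 1),
        (p i * q j : ℝ) * u i j) / ((P m * Q n : ℝ) : ℂ))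
    (ℓ : ℂ)
    (hsum : ∀ ε > (0 : ℝ), ∃ n₀ : ℕ, ∀ m n : ℕ, n₀ ≤ m → n₀ ≤ n → ‖σ m n - ℓ‖ < ε)
    (hSOP : ∀ ε > (0 : ℝ), ∃ n₀ : ℕ, ∃ l > (1 : ℝ),
      ∀ m n i : ℕ, n₀ ≤ m → n₀ ≤ n → m ≤ i → P i ≤ l * P m → ‖u i n - u m n‖ ≤ ε)
    (hSOQstrong : ∀ ε > (0 : ℝ), ∃ n₀ : ℕ, ∃ l > (1 : ℝ), ∃ k > (1 : ℝ),
      ∀ m n i j : ℕ, n₀ ≤ m → n₀ ≤ n → m ≤ i → n ≤ j →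
        P i ≤ l * P m → Q j ≤ k * Q n → ‖u i j - u i n‖ ≤ ε) :
    ∀ ε > (0 : ℝ), ∃ n₀ : ℕ, ∀ m n : ℕ, n₀ ≤ m → n₀ ≤ n → ‖u m n - ℓ‖ < ε := by
  have hPpos := pos_of_eq_sum_range hp hP
  have hQpos := pos_of_eq_sum_range hq hQ
  have hPmono := (strictMono_of_eq_sum_range hp hP).monotone
  have hQmono := (strictMono_of_eq_sum_range hq hQ).monotone
  intro ε hε
  obtain ⟨n₁, l, hl, k, hk, hosc⟩ :=
    exists_norm_sub_le_of_slowOsc (fun m => (hPpos m).le) hSOP hSOQstrong (ε / 2) (by positivity)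
  set C := 2 * l / (l - 1) * (2 * k / (k - 1))
  have hC : 0 < C :=
    mul_pos (div_pos (by linarith) (by linarith)) (div_pos (by linarith) (by linarith))
  obtain ⟨n₂, hσℓ⟩ := hsum (ε / (16 * C)) (by positivity)
  obtain ⟨N₁, hPwin⟩ := eventually_atTop.mp <|
    eventually_exists_gt_le_mul_and_div_sub_le hPpos hPmono hPtop hPratio hl
  obtain ⟨N₂, hQwin⟩ := eventually_atTop.mp <|
    eventually_exists_gt_le_mul_and_div_sub_le hQpos hQmono hQtop hQratio hk
  refine ⟨max n₁ (max n₂ (max N₁ N₂)), fun m n hm hn => ?_⟩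
  simp only [max_le_iff] at hm hn
  obtain ⟨m', hmm', hPm', hPratio'⟩ := hPwin m hm.2.2.1
  obtain ⟨n', hnn', hQn', hQratio'⟩ := hQwin n hn.2.2.2
  calc ‖u m n - ℓ‖ ≤ ε / 2 + 4 * (ε / (16 * C)) * C :=
        norm_sub_le_of_rectangle hp hq hP hQ hσ hmm' hnn' hPratio' hQratio'
          (fun i hi j hj => hosc m n i j hm.1 hn.1 (mem_Ioc.1 hi).1.le (mem_Ioc.1 hj).1.le
            ((hPmono (mem_Ioc.1 hi).2).trans hPm') ((hQmono (mem_Ioc.1 hj).2).trans hQn'))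
          (fun a b ha hb => (hσℓ a b (by omega) (by omega)).le)
    _ = ε / 2 + ε / 4 := by rw [mul_assoc, div_mul_eq_mul_div, mul_div_mul_right _ _ hC.ne']; ring
    _ < ε := by linarith

/-- Tauberian theorem: slow oscillation conditions for complex double sequences. -/
theorem stmt12 (u : ℕ → ℕ → ℂ) (p q : ℕ → ℝ)
    (hp : ∀ m, 0 < p m) (hq : ∀ n, 0 < q n)
    (P Q : ℕ → ℝ)
    (hP : ∀ m : ℕ, P m = ∑ i ∈ Finset.range (m + 1), p i)
    (hQ : ∀ n : ℕ, Q n = ∑ j ∈ Finset.range (n + 1), q j)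
    (hPtop : Tendsto P atTop atTop) (hQtop : Tendsto Q atTop atTop)
    (hPratio : Tendsto (fun m : ℕ => P (m - 1) / P m) atTop (nhds 1))
    (hQratio : Tendsto (fun n : ℕ => Q (n - 1) / Q n) atTop (nhds 1))
    (σ : ℕ → ℕ → ℂ)
    (hσ : ∀ m n : ℕ, σ m n =
      (∑ i ∈ Finset.range (m + 1), ∑ j ∈ Finset.range (n + 1),
        (p i * q j : ℝ) * u i j) / ((P m * Q n : ℝ) : ℂ))
    (ℓ : ℂ)
    (hsum : ∀ ε > (0 : ℝ), ∃ n₀ : ℕ, ∀ m n : ℕ, n₀ ≤ m → n₀ ≤ n → ‖σ m n - ℓ‖ < ε)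
    (hSOP : ∀ ε > (0 : ℝ), ∃ n₀ : ℕ, ∃ l > (1 : ℝ),
      ∀ m n i : ℕ, n₀ ≤ m → n₀ ≤ n → m ≤ i → P i ≤ l * P m → ‖u i n - u m n‖ ≤ ε)
    (hSOQ : ∀ ε > (0 : ℝ), ∃ n₀ : ℕ, ∃ k > (1 : ℝ),
      ∀ m n j : ℕ, n₀ ≤ m → n₀ ≤ n → n ≤ j → Q j ≤ k * Q n → ‖u m j - u m n‖ ≤ ε)
    (hSOQstrong : ∀ ε > (0 : ℝ), ∃ n₀ : ℕ, ∃ l > (1 : ℝ), ∃ k > (1 : ℝ),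
      ∀ m n i j : ℕ, n₀ ≤ m → n₀ ≤ n → m ≤ i → n ≤ j →
        P i ≤ l * P m → Q j ≤ k * Q n → ‖u i j - u i n‖ ≤ ε) :
    ∀ ε > (0 : ℝ), ∃ n₀ : ℕ, ∀ m n : ℕ, n₀ ≤ m → n₀ ≤ n → ‖u m n - ℓ‖ < ε :=
  stmt12_general u p q hp hq P Q hP hQ hPtop hQtop hPratio hQratio σ hσ ℓ hsum hSOP hSOQstrong
end

section
/- Let (u_{mn}) be a double sequence of complex numbers whose logarithmic means σ_{mn} = (1/(P_mQ_n)) Σ_{i=0}^m Σ_{j=0}^n u_{ij}/((i+1)(j+1)), with P_m = Σ_{i=0}^m 1/(i+1) and Q_n = Σ_{j=0}^n 1/(j+1), converge to ℓ in Pringsheim's sense. If there exists M > 0 such that m·log(m+1)·|u_{mn} − u_{m−1,n}| ≤ M and n·log(n+1)·|u_{mn} − u_{m,n−1}| ≤ M for all sufficiently large m, n, then (u_{mn}) converges to ℓ in Pringsheim's sense. -/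
/-!
Hardy's condition `‖Δu‖ ≤ C p_m / P_m` makes `u` slowly oscillating with respect to `P`: on a
block `m < i ≤ m'`, `n < j ≤ n'` with `P_{m'} ≈ (1 + η) P_m` and `Q_{n'} ≈ (1 + η) Q_n`, the values
`u i j` stay within `4 C η` of `u m n`. By inclusion–exclusion, the weighted sum of `u` over the
block is an alternating combination of the four corner sums `P_a Q_b σ_{ab}`, each within
`P_a Q_b δ` of `P_a Q_b ℓ`; as the block carries weight at least `η² P_m Q_n`, the block mean is
within `O(δ / η²)` of `ℓ`. Comparing both estimates, `‖u m n - ℓ‖ ≤ 4 C η + O(δ / η²)`.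

For the logarithmic weights `p_m = 1 / (m + 1)` we have `P_m = H_{m+1} ≤ 1 + log (m + 1)`, so
`(m + 1) P_m ≤ 3 m log (m + 1)` and the hypothesis is Hardy's condition with `C = 3 M`.
-/

open Finset Filter Topology

section

variable {E : Type*} [SeminormedAddCommGroup E]

theorem norm_sub_le_of_norm_succ_sub_le {v : ℕ → E} {g : ℕ → ℝ} {m i : ℕ} (hmi : m ≤ i)
    (hstep : ∀ k, m ≤ k → ‖v (k + 1) - v k‖ ≤ g (k + 1) - g k) :
    ‖v i - v m‖ ≤ g i - g m := by
  rw [← dist_eq_norm, dist_comm, ← sum_Ico_sub g hmi]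
  exact dist_le_Ico_sum_of_dist_le hmi fun hk _ => by
    rw [dist_comm, dist_eq_norm]; exact hstep _ hk

theorem norm_sub_le_of_norm_succ_sub_le_mul_div {v : ℕ → E} {P : ℕ → ℝ} {C : ℝ} {m i : ℕ}
    (hP : Monotone P) (hPm : 0 < P m) (hC : 0 ≤ C) (hmi : m ≤ i)
    (hstep : ∀ k, m ≤ k → ‖v (k + 1) - v k‖ ≤ C * (P (k + 1) - P k) / P (k + 1)) :
    ‖v i - v m‖ ≤ C * (P i - P m) / P m := by
  have h := norm_sub_le_of_norm_succ_sub_le (g := fun k => C * P k / P m) hmi fun k hk =>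
    calc ‖v (k + 1) - v k‖ ≤ C * (P (k + 1) - P k) / P (k + 1) := hstep k hk
      _ ≤ C * (P (k + 1) - P k) / P m :=
        div_le_div_of_nonneg_left (mul_nonneg hC (sub_nonneg.2 (hP k.le_succ))) hPm
          (hP (hk.trans k.le_succ))
      _ = C * P (k + 1) / P m - C * P k / P m := by ring
  rwa [mul_sub, sub_div]

theorem norm_sub_le_four_mul_of_mem_block {u : ℕ → ℕ → E} {P Q : ℕ → ℝ} {C η : ℝ}
    {N m n m' n' i j : ℕ} (hP : Monotone P) (hQ : Monotone Q) (hPm : 0 < P m) (hQn : 0 < Q n)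
    (hC : 0 ≤ C) (hm : N ≤ m) (hn : N ≤ n) (hmi : m ≤ i) (him : i ≤ m') (hnj : n ≤ j)
    (hjn : j ≤ n') (hm' : P m' - P m ≤ 2 * η * P m) (hn' : Q n' - Q n ≤ 2 * η * Q n)
    (hu₁ : ∀ i j, N ≤ i → N ≤ j → ‖u (i + 1) j - u i j‖ ≤ C * (P (i + 1) - P i) / P (i + 1))
    (hu₂ : ∀ i j, N ≤ i → N ≤ j → ‖u i (j + 1) - u i j‖ ≤ C * (Q (j + 1) - Q j) / Q (j + 1)) :
    ‖u i j - u m n‖ ≤ 4 * C * η := by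
  have hPi : C * (P i - P m) / P m ≤ 2 * C * η := by
    rw [div_le_iff₀ hPm]; nlinarith [hP him]
  have hQj : C * (Q j - Q n) / Q n ≤ 2 * C * η := by
    rw [div_le_iff₀ hQn]; nlinarith [hQ hjn]
  calc ‖u i j - u m n‖ ≤ ‖u i j - u m j‖ + ‖u m j - u m n‖ :=
        norm_sub_le_norm_sub_add_norm_sub _ _ _
    _ ≤ 2 * C * η + 2 * C * η := add_le_add
        ((norm_sub_le_of_norm_succ_sub_le_mul_div (v := fun k => u k j) hP hPm hC hmi
          fun k hk => hu₁ k j (hm.trans hk) (hn.trans hnj)).trans hPi)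
        ((norm_sub_le_of_norm_succ_sub_le_mul_div (v := u m) hQ hQn hC hnj
          fun k hk => hu₂ m k hm (hn.trans hk)).trans hQj)
    _ = 4 * C * η := by ring

theorem tendsto_uncurry_atTop_nhds_iff {u : ℕ → ℕ → E} {ℓ : E} :
    Tendsto (Function.uncurry u) atTop (𝓝 ℓ) ↔
      ∀ ε > 0, ∃ N, ∀ m n, N ≤ m → N ≤ n → ‖u m n - ℓ‖ < ε := by
  simp only [Metric.tendsto_atTop, Prod.forall, Prod.exists, Prod.mk_le_mk, dist_eq_norm,
    Function.uncurry_apply_pair]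
  exact forall₂_congr fun ε _ =>
    ⟨fun ⟨a, b, h⟩ => ⟨max a b, fun m n hm hn => h m n ⟨by omega, by omega⟩⟩,
      fun ⟨N, h⟩ => ⟨N, N, fun m n hmn => h m n hmn.1 hmn.2⟩⟩

end

theorem succ_sub_eq_of_forall_eq_sum_range {M : Type*} [AddCommGroup M] {p P : ℕ → M}
    (hP : ∀ m, P m = ∑ i ∈ range (m + 1), p i) (k : ℕ) : P (k + 1) - P k = p (k + 1) := by
  rw [hP, hP k, sum_range_succ _ (k + 1), add_sub_cancel_left]

theorem monotone_of_forall_eq_sum_range {p P : ℕ → ℝ}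
    (hP : ∀ m, P m = ∑ i ∈ range (m + 1), p i) (hp : ∀ i, 0 ≤ p i) : Monotone P :=
  monotone_nat_of_le_succ fun k =>
    sub_nonneg.1 ((succ_sub_eq_of_forall_eq_sum_range hP k).symm ▸ hp (k + 1))

theorem exists_lt_sub_mem_Icc_of_tendsto_atTop {P : ℕ → ℝ} {K η : ℝ} {a : ℕ} (hP : Monotone P)
    (hPtop : Tendsto P atTop atTop) (hinc : ∀ k, P (k + 1) ≤ P k + K) (hη : 0 < η)
    (hPa : 0 < P a) (hK : K ≤ η * P a) :
    ∃ b, a < b ∧ η * P a ≤ P b - P a ∧ P b - P a ≤ 2 * η * P a := by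
  classical
  have hex : ∃ b, (1 + η) * P a ≤ P b := (hPtop.eventually_ge_atTop _).exists
  have hab : a < Nat.find hex := by
    by_contra! h
    have := (Nat.find_spec hex).trans (hP h)
    nlinarith
  obtain ⟨c, hc⟩ := Nat.exists_eq_add_one_of_ne_zero (by omega : Nat.find hex ≠ 0)
  have hPc : P c < (1 + η) * P a := not_le.1 (Nat.find_min hex (by omega))
  refine ⟨Nat.find hex, hab, by linarith [Nat.find_spec hex], ?_⟩
  rw [hc]
  linarith [hinc c]

theorem sum_Ico_sum_Ico_eq {M : Type*} [AddCommGroup M] (f : ℕ → ℕ → M) {a a' b b' : ℕ}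
    (ha : a ≤ a') (hb : b ≤ b') :
    ∑ i ∈ Ico a a', ∑ j ∈ Ico b b', f i j =
      (∑ i ∈ range a', ∑ j ∈ range b', f i j) - ∑ i ∈ range a, ∑ j ∈ range b', f i j -
        ((∑ i ∈ range a', ∑ j ∈ range b, f i j) - ∑ i ∈ range a, ∑ j ∈ range b, f i j) := by
  simp only [sum_Ico_eq_sub _ ha, sum_Ico_eq_sub _ hb, sum_sub_distrib]
  abel

section

variable {E : Type*} [SeminormedAddCommGroup E] [NormedSpace ℝ E]

theorem norm_sum_smul_sub_le {ι : Type*} (s : Finset ι) {w : ι → ℝ} {f : ι → E} {c : E}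
    {r : ℝ} (hw : ∀ i ∈ s, 0 ≤ w i) (hf : ∀ i ∈ s, ‖f i - c‖ ≤ r) :
    ‖∑ i ∈ s, w i • f i - (∑ i ∈ s, w i) • c‖ ≤ (∑ i ∈ s, w i) * r := by
  rw [sum_smul, ← sum_sub_distrib, sum_mul]
  refine (norm_sum_le _ _).trans (sum_le_sum fun i hi => ?_)
  rw [← smul_sub, norm_smul, Real.norm_of_nonneg (hw i hi)]
  exact mul_le_mul_of_nonneg_left (hf i hi) (hw i hi)

theorem mul_norm_sub_le_of_block {p q P Q : ℕ → ℝ} (hP : ∀ m, P m = ∑ i ∈ range (m + 1), p i)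
    (hQ : ∀ n, Q n = ∑ j ∈ range (n + 1), q j) (hp : ∀ i, 0 ≤ p i) (hq : ∀ j, 0 ≤ q j)
    {u : ℕ → ℕ → E} {ℓ : E} {m n m' n' : ℕ} (hm : m ≤ m') (hn : n ≤ n') {r e : ℝ}
    (hosc : ∀ i ∈ Ico (m + 1) (m' + 1), ∀ j ∈ Ico (n + 1) (n' + 1), ‖u i j - u m n‖ ≤ r)
    (hcorner : ∀ a b, m ≤ a → a ≤ m' → n ≤ b → b ≤ n' →
      ‖∑ i ∈ range (a + 1), ∑ j ∈ range (b + 1), (p i * q j) • u i j - (P a * Q b) • ℓ‖ ≤ e) :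
    (P m' - P m) * (Q n' - Q n) * ‖u m n - ℓ‖ ≤ (P m' - P m) * (Q n' - Q n) * r + 4 * e := by
  set s := Ico (m + 1) (m' + 1) ×ˢ Ico (n + 1) (n' + 1)
  set W := (P m' - P m) * (Q n' - Q n)
  set B := ∑ x ∈ s, (p x.1 * q x.2) • u x.1 x.2
  have hW : ∑ x ∈ s, p x.1 * q x.2 = W := by
    rw [sum_product, ← sum_mul_sum, sum_Ico_eq_sub _ (by omega), sum_Ico_eq_sub _ (by omega),
      ← hP, ← hP, ← hQ, ← hQ]
  have hW0 : 0 ≤ W := hW ▸ sum_nonneg fun x _ => mul_nonneg (hp _) (hq _)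
  have hmean : ‖B - W • u m n‖ ≤ W * r := by
    rw [← hW]
    exact norm_sum_smul_sub_le s (fun x _ => mul_nonneg (hp _) (hq _))
      fun x hx => hosc x.1 (mem_product.1 hx).1 x.2 (mem_product.1 hx).2
  have hcorners : ‖B - W • ℓ‖ ≤ 4 * e := by
    set X := fun a b => ∑ i ∈ range (a + 1), ∑ j ∈ range (b + 1), (p i * q j) • u i j -
      (P a * Q b) • ℓ
    have hB : B - W • ℓ = (X m' n' - X m n') - (X m' n - X m n) := by
      rw [show B = _ from sum_product _ _ _, sum_Ico_sum_Ico_eq (fun i j => (p i * q j) • u i j)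
        (by omega : m + 1 ≤ m' + 1) (by omega : n + 1 ≤ n' + 1)]
      simp only [X, W, sub_mul, mul_sub, sub_smul]
      abel
    rw [hB]
    refine (norm_sub_le _ _).trans ?_
    linarith [norm_sub_le (X m' n') (X m n'), norm_sub_le (X m' n) (X m n),
      hcorner m' n' hm le_rfl hn le_rfl, hcorner m n' le_rfl hm hn le_rfl,
      hcorner m' n hm le_rfl le_rfl hn, hcorner m n le_rfl hm le_rfl hn]
  calc W * ‖u m n - ℓ‖ = ‖(B - W • ℓ) - (B - W • u m n)‖ := by
        rw [sub_sub_sub_cancel_left, ← smul_sub, norm_smul, Real.norm_of_nonneg hW0]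
    _ ≤ W * r + 4 * e := by linarith [norm_sub_le (B - W • ℓ) (B - W • u m n)]

noncomputable def weightedMean (p q : ℕ → ℝ) (u : ℕ → ℕ → E) (m n : ℕ) : E :=
  ((∑ i ∈ range (m + 1), p i) * ∑ j ∈ range (n + 1), q j)⁻¹ •
    ∑ i ∈ range (m + 1), ∑ j ∈ range (n + 1), (p i * q j) • u i j

theorem norm_sub_smul_le_of_norm_inv_smul_sub_le {c δ : ℝ} {x ℓ : E} (hc : 0 < c)
    (h : ‖c⁻¹ • x - ℓ‖ ≤ δ) : ‖x - c • ℓ‖ ≤ c * δ :=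
  calc ‖x - c • ℓ‖ = ‖c • (c⁻¹ • x - ℓ)‖ := by rw [smul_sub, smul_inv_smul₀ hc.ne']
    _ = c * ‖c⁻¹ • x - ℓ‖ := by rw [norm_smul, Real.norm_of_nonneg hc.le]
    _ ≤ c * δ := mul_le_mul_of_nonneg_left h hc.le

theorem norm_sub_le_of_block {p q P Q : ℕ → ℝ} (hP : ∀ m, P m = ∑ i ∈ range (m + 1), p i)
    (hQ : ∀ n, Q n = ∑ j ∈ range (n + 1), q j) (hp : ∀ i, 0 ≤ p i) (hq : ∀ j, 0 ≤ q j)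
    {u : ℕ → ℕ → E} {ℓ : E} {m n m' n' : ℕ} {η r δ : ℝ} (hη : 0 < η) (hη1 : η ≤ 1)
    (hδ : 0 ≤ δ) (hPm : 0 < P m) (hQn : 0 < Q n) (hm : m ≤ m') (hn : n ≤ n')
    (hm₁ : η * P m ≤ P m' - P m) (hm₂ : P m' - P m ≤ 2 * η * P m)
    (hn₁ : η * Q n ≤ Q n' - Q n) (hn₂ : Q n' - Q n ≤ 2 * η * Q n)
    (hosc : ∀ i ∈ Ico (m + 1) (m' + 1), ∀ j ∈ Ico (n + 1) (n' + 1), ‖u i j - u m n‖ ≤ r)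
    (hσ : ∀ a b, m ≤ a → a ≤ m' → n ≤ b → b ≤ n' → ‖weightedMean p q u a b - ℓ‖ ≤ δ) :
    ‖u m n - ℓ‖ ≤ r + 36 * δ / η ^ 2 := by
  have hPmono := monotone_of_forall_eq_sum_range hP hp
  have hQmono := monotone_of_forall_eq_sum_range hQ hq
  have hcorner : ∀ a b, m ≤ a → a ≤ m' → n ≤ b → b ≤ n' →
      ‖∑ i ∈ range (a + 1), ∑ j ∈ range (b + 1), (p i * q j) • u i j - (P a * Q b) • ℓ‖ ≤
        P m' * Q n' * δ := by
    intro a b ha ha' hb hb'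
    have hPa := hPm.trans_le (hPmono ha)
    have hQb := hQn.trans_le (hQmono hb)
    have h := hσ a b ha ha' hb hb'
    rw [weightedMean, ← hP, ← hQ] at h
    exact (norm_sub_smul_le_of_norm_inv_smul_sub_le (mul_pos hPa hQb) h).trans <|
      mul_le_mul_of_nonneg_right
        (mul_le_mul (hPmono ha') (hQmono hb') hQb.le (hPa.le.trans (hPmono ha'))) hδ
  have hblock := mul_norm_sub_le_of_block hP hQ hp hq hm hn hosc hcorner
  set W := (P m' - P m) * (Q n' - Q n)
  have hW : η ^ 2 * (P m * Q n) ≤ W := by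
    nlinarith [mul_le_mul hm₁ hn₁ (by positivity) (by linarith)]
  have hWpos : 0 < W := lt_of_lt_of_le (by positivity) hW
  have hPQ : P m' * Q n' ≤ 3 * P m * (3 * Q n) :=
    mul_le_mul (by nlinarith) (by nlinarith) (by linarith) (by linarith)
  refine le_of_mul_le_mul_left ?_ hWpos
  calc W * ‖u m n - ℓ‖ ≤ W * r + 4 * (P m' * Q n' * δ) := hblock
    _ ≤ W * r + 36 * δ / η ^ 2 * (η ^ 2 * (P m * Q n)) := by
      have h36 : 36 * δ / η ^ 2 * (η ^ 2 * (P m * Q n)) = 4 * (3 * P m * (3 * Q n) * δ) := by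
        field_simp; ring
      rw [h36]
      gcongr
    _ ≤ W * (r + 36 * δ / η ^ 2) := by rw [mul_add, mul_comm W (36 * δ / η ^ 2)]; gcongr

theorem tendsto_of_tendsto_weightedMean_of_norm_succ_sub_le {p q P Q : ℕ → ℝ}
    (hP : ∀ m, P m = ∑ i ∈ range (m + 1), p i) (hQ : ∀ n, Q n = ∑ j ∈ range (n + 1), q j)
    (hp : ∀ i, 0 ≤ p i) (hq : ∀ j, 0 ≤ q j) {K : ℝ} (hpK : ∀ i, p i ≤ K) (hqK : ∀ j, q j ≤ K)
    (hPtop : Tendsto P atTop atTop) (hQtop : Tendsto Q atTop atTop)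
    {u : ℕ → ℕ → E} {ℓ : E}
    (hσ : Tendsto (Function.uncurry (weightedMean p q u)) atTop (𝓝 ℓ))
    {C : ℝ} (hC : 0 ≤ C) {N₁ : ℕ}
    (hu₁ : ∀ i j, N₁ ≤ i → N₁ ≤ j → ‖u (i + 1) j - u i j‖ ≤ C * p (i + 1) / P (i + 1))
    (hu₂ : ∀ i j, N₁ ≤ i → N₁ ≤ j → ‖u i (j + 1) - u i j‖ ≤ C * q (j + 1) / Q (j + 1)) :
    Tendsto (Function.uncurry u) atTop (𝓝 ℓ) := by
  rw [tendsto_uncurry_atTop_nhds_iff] at hσ ⊢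
  have hPsucc := succ_sub_eq_of_forall_eq_sum_range hP
  have hQsucc := succ_sub_eq_of_forall_eq_sum_range hQ
  have hPmono := monotone_of_forall_eq_sum_range hP hp
  have hQmono := monotone_of_forall_eq_sum_range hQ hq
  intro ε hε
  set η := min 1 (ε / (12 * (C + 1)))
  have hη : 0 < η := lt_min one_pos (by positivity)
  have hCη : 4 * C * η ≤ ε / 3 := by
    have h := min_le_right 1 (ε / (12 * (C + 1)))
    rw [le_div_iff₀ (by positivity)] at h
    nlinarith
  obtain ⟨Nσ, hNσ⟩ := hσ (ε * η ^ 2 / 108) (by positivity)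
  have hlarge : ∀ R : ℕ → ℝ, Tendsto R atTop atTop → ∀ᶠ a in atTop, K ≤ η * R a ∧ 0 < R a :=
    fun R hR => ((hR.eventually_ge_atTop (K / η)).and (hR.eventually_gt_atTop 0)).mono
      fun a ha => ⟨(div_le_iff₀' hη).1 ha.1, ha.2⟩
  obtain ⟨N₂, hN₂⟩ := eventually_atTop.1 ((hlarge P hPtop).and (hlarge Q hQtop))
  refine ⟨max N₁ (max Nσ N₂), fun m n hm hn => ?_⟩
  obtain ⟨⟨hPK, hPm⟩, -⟩ := hN₂ m (by omega)
  obtain ⟨-, hQK, hQn⟩ := hN₂ n (by omega)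
  obtain ⟨m', hmm', hm₁, hm₂⟩ := exists_lt_sub_mem_Icc_of_tendsto_atTop hPmono hPtop
    (fun k => by linarith [hPsucc k, hpK (k + 1)]) hη hPm hPK
  obtain ⟨n', hnn', hn₁, hn₂⟩ := exists_lt_sub_mem_Icc_of_tendsto_atTop hQmono hQtop
    (fun k => by linarith [hQsucc k, hqK (k + 1)]) hη hQn hQK
  have hosc : ∀ i ∈ Ico (m + 1) (m' + 1), ∀ j ∈ Ico (n + 1) (n' + 1),
      ‖u i j - u m n‖ ≤ 4 * C * η := by
    intro i hi j hj
    rw [mem_Ico] at hi hj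
    exact norm_sub_le_four_mul_of_mem_block (N := N₁) hPmono hQmono hPm hQn hC (by omega) (by omega)
      (by omega) (by omega) (by omega) (by omega) hm₂ hn₂ (by simpa only [hPsucc] using hu₁)
      (by simpa only [hQsucc] using hu₂)
  have hblock := norm_sub_le_of_block hP hQ hp hq hη (min_le_left _ _) (by positivity) hPm hQn
    hmm'.le hnn'.le hm₁ hm₂ hn₁ hn₂ hosc fun a b ha _ hb _ => (hNσ a b (by omega) (by omega)).le
  have hδ : 36 * (ε * η ^ 2 / 108) / η ^ 2 = ε / 3 := by field_simp; ring
  linarith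

end

theorem natCast_succ_mul_harmonic_succ_le {k : ℕ} (hk : 2 ≤ k) :
    ((k : ℝ) + 1) * harmonic (k + 1) ≤ 3 * (k * Real.log (k + 1)) := by
  have hk' : (2 : ℝ) ≤ k := by exact_mod_cast hk
  have hlog : 1 ≤ Real.log (k + 1) := by
    rw [Real.le_log_iff_exp_le (by positivity)]
    linarith [Real.exp_one_lt_d9]
  have hH : (harmonic (k + 1) : ℝ) ≤ 1 + Real.log (k + 1) := by
    exact_mod_cast harmonic_le_one_add_log (k + 1)
  nlinarith

theorem le_mul_div_sum_of_mul_log_mul_le {k : ℕ} (hk : 2 ≤ k) {d M : ℝ} (hM : 0 ≤ M)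
    (h : k * Real.log (k + 1) * d ≤ M) :
    d ≤ 3 * M * (1 / ((k : ℝ) + 1)) / ∑ i ∈ range (k + 1), 1 / ((i : ℝ) + 1) := by
  have hH : ∑ i ∈ range (k + 1), 1 / ((i : ℝ) + 1) = harmonic (k + 1) := by
    simp [harmonic]
  have hk' : (2 : ℝ) ≤ k := by exact_mod_cast hk
  have hkL : 0 < k * Real.log (k + 1) := by
    have : 0 < Real.log (k + 1) := Real.log_pos (by linarith)
    positivity
  have hHpos : (0 : ℝ) < harmonic (k + 1) := by exact_mod_cast harmonic_pos k.succ_ne_zero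
  calc d ≤ M / (k * Real.log (k + 1)) := by rw [le_div_iff₀ hkL]; linarith
    _ ≤ 3 * M / ((k + 1) * harmonic (k + 1)) := by
      rw [div_le_div_iff₀ hkL (by positivity)]
      nlinarith [natCast_succ_mul_harmonic_succ_le hk]
    _ = _ := by rw [hH]; field_simp

/-- Logarithmic means specialization of the Hardy-type Tauberian theorem for complex
double sequences. -/
theorem stmt15 (u : ℕ → ℕ → ℂ) (ℓ : ℂ)
    (P Q : ℕ → ℝ)
    (hP : ∀ m : ℕ, P m = ∑ i ∈ Finset.range (m + 1), (1 : ℝ) / ((i : ℝ) + 1))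
    (hQ : ∀ n : ℕ, Q n = ∑ j ∈ Finset.range (n + 1), (1 : ℝ) / ((j : ℝ) + 1))
    (σ : ℕ → ℕ → ℂ)
    (hσ : ∀ m n : ℕ, σ m n =
      (∑ i ∈ Finset.range (m + 1), ∑ j ∈ Finset.range (n + 1),
        u i j / (((i : ℂ) + 1) * ((j : ℂ) + 1))) / ((P m * Q n : ℝ) : ℂ))
    (hsum : ∀ ε > (0 : ℝ), ∃ n₀ : ℕ, ∀ m n : ℕ, n₀ ≤ m → n₀ ≤ n → ‖σ m n - ℓ‖ < ε)
    (M : ℝ) (hM : 0 < M)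
    (hHardy : ∃ n₁ : ℕ, ∀ m n : ℕ, n₁ ≤ m → n₁ ≤ n →
      (m : ℝ) * Real.log ((m : ℝ) + 1) * ‖u m n - u (m - 1) n‖ ≤ M ∧
      (n : ℝ) * Real.log ((n : ℝ) + 1) * ‖u m n - u m (n - 1)‖ ≤ M) :
    ∀ ε > (0 : ℝ), ∃ n₀ : ℕ, ∀ m n : ℕ, n₀ ≤ m → n₀ ≤ n → ‖u m n - ℓ‖ < ε := by
  obtain rfl : P = Q := funext fun n => (hP n).trans (hQ n).symm
  obtain ⟨n₁, hH⟩ := hHardy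
  have hPtop : Tendsto P atTop atTop := by
    rw [funext hP]
    exact Real.tendsto_sum_range_one_div_nat_succ_atTop.comp (tendsto_add_atTop_nat 1)
  have hσ' : σ = weightedMean (fun i => 1 / ((i : ℝ) + 1)) (fun j => 1 / ((j : ℝ) + 1)) u := by
    ext m n
    rw [hσ, weightedMean, ← hP, ← hP]
    simp only [Complex.real_smul, div_eq_inv_mul, mul_sum, mul_inv]
    push_cast
    exact sum_congr rfl fun _ _ => sum_congr rfl fun _ _ => by ring
  have hp1 : ∀ i : ℕ, 1 / ((i : ℝ) + 1) ≤ 1 := fun i => div_le_one_of_le₀ (by simp) (by positivity)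
  rw [← tendsto_uncurry_atTop_nhds_iff]
  refine tendsto_of_tendsto_weightedMean_of_norm_succ_sub_le (C := 3 * M) (N₁ := max n₁ 2) hP hP
    (fun i => by positivity) (fun j => by positivity) hp1 hp1 hPtop hPtop
    (hσ' ▸ tendsto_uncurry_atTop_nhds_iff.2 hsum) (by positivity)
    (fun i j hi hj => ?_) (fun i j hi hj => ?_)
  · have h := (hH (i + 1) j (by omega) (by omega)).1
    rw [Nat.add_sub_cancel] at h
    rw [hP]
    exact le_mul_div_sum_of_mul_log_mul_le (by omega) hM.le h
  · have h := (hH i (j + 1) (by omega) (by omega)).2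
    rw [Nat.add_sub_cancel] at h
    rw [hP]
    exact le_mul_div_sum_of_mul_log_mul_le (by omega) hM.le h
end
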